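/- arXiv:2501.06197 — 8 statements merged into one kernel-verified Lean document; each statement's English description precedes it below -/
import Mathlib

section
/- Let n be a positive natural number, let G be a simple graph on Fin n, let p : Fin n → EuclideanSpace ℝ (Fin 3), and let w : Fin n → Fin n → ℝ be a symmetric weight function. Let C be the weighted coboundary matrix of the anisotropic sheaf: its rows are indexed by the edges of G, represented as pairs (i,j) with i < j and G.Adj i j, its columns by Fin n × Fin 3, and the row of edge (i,j) has entry −w i j · (p j a − p i a) at column (i,a), entry w i j · (p j a − p i a) at column (j,a), and 0 at every other column. Then the sheaf Laplacian L = Cᵀ * C equals the ANM Hessian: for i ≠ j, the entry L (i,a) (j,b) equals −w i j ^ 2 · (p j a − p i a) · (p j b − p i b) if G.Adj i j and 0 otherwise; and the diagonal-block entry L (i,a) (i,b) equals the sum over all j adjacent to i of w i j ^ 2 · (p j a − p i a) · (p j b − p i b). -/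
open Matrix

private def fEnt {n : ℕ} (p : Fin n → EuclideanSpace ℝ (Fin 3)) (w : Fin n → Fin n → ℝ)
    (k : Fin n) (c : Fin 3) (e : Fin n × Fin n) : ℝ :=
  if k = e.1 then -(w e.1 e.2 * (p e.2 c - p e.1 c))
  else if k = e.2 then w e.1 e.2 * (p e.2 c - p e.1 c) else 0

/-- The sheaf Laplacian `L = Cᵀ * C` of the anisotropic sheaf equals the ANM Hessian:
off-diagonal blocks are `−w i j ^ 2 (p j a − p i a)(p j b − p i b)` for adjacent `i ≠ j`
(and `0` for non-adjacent pairs), and diagonal blocks are the corresponding sums over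
neighbors. -/
theorem anisotropic_sheaf_laplacian_eq_ANM_hessian
    {n : ℕ} (hn : 0 < n) (G : SimpleGraph (Fin n)) [DecidableRel G.Adj]
    (p : Fin n → EuclideanSpace ℝ (Fin 3)) (w : Fin n → Fin n → ℝ)
    (hw : ∀ i j, w i j = w j i)
    (C : Matrix {e : Fin n × Fin n // e.1 < e.2 ∧ G.Adj e.1 e.2} (Fin n × Fin 3) ℝ)
    (hC : ∀ (e : {e : Fin n × Fin n // e.1 < e.2 ∧ G.Adj e.1 e.2}) (k : Fin n) (a : Fin 3),
      C e (k, a) =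
        if k = e.1.1 then -(w e.1.1 e.1.2 * (p e.1.2 a - p e.1.1 a))
        else if k = e.1.2 then w e.1.1 e.1.2 * (p e.1.2 a - p e.1.1 a)
        else 0) :
    (∀ (i j : Fin n) (a b : Fin 3), i ≠ j →
      (Cᵀ * C) (i, a) (j, b) =
        if G.Adj i j then -(w i j ^ 2 * (p j a - p i a) * (p j b - p i b)) else 0) ∧
    (∀ (i : Fin n) (a b : Fin 3),
      (Cᵀ * C) (i, a) (i, b) =
        ∑ j ∈ Finset.univ.filter (fun j => G.Adj i j),
          w i j ^ 2 * (p j a - p i a) * (p j b - p i b)) := by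
  classical
  have fe1 : ∀ (c : Fin 3) (e : Fin n × Fin n),
      fEnt p w e.1 c e = -(w e.1 e.2 * (p e.2 c - p e.1 c)) := by
    intro c e; simp [fEnt]
  have fe2 : ∀ (c : Fin 3) (e : Fin n × Fin n), e.1 ≠ e.2 →
      fEnt p w e.2 c e = w e.1 e.2 * (p e.2 c - p e.1 c) := by
    intro c e h; unfold fEnt; rw [if_neg (Ne.symm h), if_pos rfl]
  have fe3 : ∀ (k : Fin n) (c : Fin 3) (e : Fin n × Fin n), k ≠ e.1 → k ≠ e.2 →
      fEnt p w k c e = 0 := by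
    intro k c e h1 h2; unfold fEnt; rw [if_neg h1, if_neg h2]
  have key : ∀ (i j : Fin n) (a b : Fin 3),
      (Cᵀ * C) (i, a) (j, b) =
      ∑ e ∈ Finset.univ.filter (fun e : Fin n × Fin n => e.1 < e.2 ∧ G.Adj e.1 e.2),
        fEnt p w i a e * fEnt p w j b e := by
    intro i j a b
    rw [Matrix.mul_apply,
      Finset.sum_subtype (p := fun e : Fin n × Fin n => e.1 < e.2 ∧ G.Adj e.1 e.2)
        (Finset.univ.filter (fun e : Fin n × Fin n => e.1 < e.2 ∧ G.Adj e.1 e.2))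
        (by simp) (fun e => fEnt p w i a e * fEnt p w j b e)]
    refine Finset.sum_congr rfl fun e _ => ?_
    simp [Matrix.transpose_apply, hC, fEnt]
  -- generic vanishing lemma
  have hzero : ∀ (i j : Fin n) (a b : Fin 3), i < j → ∀ e : Fin n × Fin n,
      e.1 < e.2 → e ≠ (i, j) → fEnt p w i a e * fEnt p w j b e = 0 := by
    intro i j a b hij e hlt hne
    by_cases h1 : i = e.1
    · by_cases h2 : j = e.2
      · exact absurd (Prod.ext_iff.mpr ⟨h1.symm, h2.symm⟩) hne
      · have h3 : j ≠ e.1 := fun h => hij.ne (h1.trans h.symm)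
        rw [fe3 j b e h3 h2, mul_zero]
    · by_cases h2 : i = e.2
      · have h3 : j ≠ e.1 := fun h => absurd hlt (by rw [← h, ← h2]; exact not_lt.mpr hij.le)
        have h4 : j ≠ e.2 := fun h => hij.ne (h2.trans h.symm)
        rw [fe3 j b e h3 h4, mul_zero]
      · rw [fe3 i a e h1 h2, zero_mul]
  constructor
  · intro i j a b hij
    rw [key]
    by_cases hadj : G.Adj i j
    · rw [if_pos hadj]
      rcases lt_or_gt_of_ne hij with hlt | hgt
      · rw [Finset.sum_eq_single_of_mem (i, j) (by simp [hlt, hadj])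
          (fun e he hne => hzero i j a b hlt e
            (by simpa using (Finset.mem_filter.mp he).2.1) hne)]
        have e1 : fEnt p w i a (i, j) = -(w i j * (p j a - p i a)) := fe1 a (i, j)
        have e2 : fEnt p w j b (i, j) = w i j * (p j b - p i b) := fe2 b (i, j) hij
        rw [e1, e2]; ring
      · rw [Finset.sum_eq_single_of_mem (j, i) (by simp [hgt, hadj.symm])
          (fun e he hne => by
            rw [mul_comm]
            exact hzero j i b a hgt e (by simpa using (Finset.mem_filter.mp he).2.1) hne)]
        have e1 : fEnt p w j b (j, i) = -(w j i * (p i b - p j b)) := fe1 b (j, i)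
        have e2 : fEnt p w i a (j, i) = w j i * (p i a - p j a) := fe2 a (j, i) (Ne.symm hij)
        rw [e1, e2, hw j i]; ring
    · rw [if_neg hadj]
      refine Finset.sum_eq_zero fun e he => ?_
      simp only [Finset.mem_filter, Finset.mem_univ, true_and] at he
      rcases lt_or_gt_of_ne hij with hlt | hgt
      · refine hzero i j a b hlt e he.1 fun h => hadj ?_
        rw [h] at he; exact he.2
      · rw [mul_comm]
        refine hzero j i b a hgt e he.1 fun h => hadj ?_
        rw [h] at he; exact he.2.symm
  · intro i a b
    rw [key i i a b]
    rw [← Finset.sum_filter_of_ne (p := fun e : Fin n × Fin n => e.1 = i ∨ e.2 = i)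
      (f := fun e => fEnt p w i a e * fEnt p w i b e)
      (fun e he hne => by
        rcases eq_or_ne e.1 i with h | h
        · exact Or.inl h
        · rcases eq_or_ne e.2 i with h' | h'
          · exact Or.inr h'
          · exact absurd (mul_eq_zero_of_left (fe3 i a e (Ne.symm h) (Ne.symm h')) _) hne)]
    refine Finset.sum_nbij' (i := fun e => if e.1 = i then e.2 else e.1)
      (j := fun j => if i < j then (i, j) else (j, i)) ?_ ?_ ?_ ?_ ?_
    · intro e he
      simp only [Finset.mem_filter, Finset.mem_univ, true_and, Finset.filter_filter] at he ⊢
      rcases he with ⟨⟨hlt, hadj⟩, hio⟩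
      by_cases h1 : e.1 = i
      · rw [if_pos h1]; exact h1 ▸ hadj
      · rw [if_neg h1]; exact (hio.resolve_left h1) ▸ hadj.symm
    · intro j hj
      simp only [Finset.mem_filter, Finset.mem_univ, true_and] at hj ⊢
      by_cases hlt : i < j
      · rw [if_pos hlt]; exact ⟨⟨hlt, hj⟩, Or.inl rfl⟩
      · rw [if_neg hlt]
        exact ⟨⟨lt_of_le_of_ne (not_lt.mp hlt) hj.ne', hj.symm⟩, Or.inr rfl⟩
    · intro e he
      simp only [Finset.mem_filter, Finset.mem_univ, true_and] at he
      by_cases h1 : e.1 = i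
      · rw [if_pos h1, if_pos (h1 ▸ he.1.1)]
        simp [Prod.ext_iff, h1]
      · have h2 : e.2 = i := he.2.resolve_left h1
        rw [if_neg h1, if_neg (by rw [← h2]; exact not_lt.mpr he.1.1.le)]
        simp [Prod.ext_iff, h2]
    · intro j hj
      simp only [Finset.mem_filter, Finset.mem_univ, true_and] at hj
      by_cases hlt : i < j
      · simp [hlt]
      · simp [hlt, hj.ne']
    · intro e he
      simp only [Finset.mem_filter, Finset.mem_univ, true_and] at he
      dsimp only
      have hne : e.1 ≠ e.2 := he.1.1.ne
      by_cases h1 : e.1 = i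
      · rw [if_pos h1, ← h1, fe1 a e, fe1 b e]
        ring
      · have h2 : e.2 = i := he.2.resolve_left h1
        rw [if_neg h1, ← h2, fe2 a e hne, fe2 b e hne, hw e.1 e.2]
        ring
end

section
/- Let V be a finite type and p : V → EuclideanSpace ℝ (Fin 3). If there exist vertices i, j, k such that p i, p j, p k are affinely independent, then the linear map Φ : ℝ³ × ℝ³ → (V → EuclideanSpace ℝ (Fin 3)) defined by Φ(a,b) v = b + a ×₃ p v is injective. In particular, the six fields given by the three coordinate translations (a = 0, b = eₖ) and the three rotations about the coordinate axes (a = eₖ, b = 0) are linearly independent. -/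
/-- The cross product on `EuclideanSpace ℝ (Fin 3)`. -/
noncomputable def cross3 (a b : EuclideanSpace ℝ (Fin 3)) : EuclideanSpace ℝ (Fin 3) :=
  (WithLp.equiv 2 (Fin 3 → ℝ)).symm
    (crossProduct ((WithLp.equiv 2 (Fin 3 → ℝ)) a) ((WithLp.equiv 2 (Fin 3 → ℝ)) b))

lemma cross_zero_parallel (a u : Fin 3 → ℝ) (ha : a ≠ 0) (h : crossProduct a u = 0) :
    ∃ s : ℝ, u = s • a := by
  rw [cross_apply] at h
  have h0 : a 1 * u 2 - a 2 * u 1 = 0 := congrFun h 0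
  have h1 : a 2 * u 0 - a 0 * u 2 = 0 := congrFun h 1
  have h2 : a 0 * u 1 - a 1 * u 0 = 0 := congrFun h 2
  obtain ⟨m, hm⟩ := Function.ne_iff.mp ha
  simp only [Pi.zero_apply] at hm
  have hx : ∀ x : Fin 3, a m * u x = u m * a x := by
    intro x
    fin_cases m <;> fin_cases x <;>
      simp only [Fin.zero_eta, Fin.mk_one, Fin.isValue, show (⟨2, by omega⟩ : Fin 3) = 2 from rfl] <;>
      nlinarith [h0, h1, h2]
  refine ⟨u m / a m, funext fun x => ?_⟩
  have := hx x
  simp only [Pi.smul_apply, smul_eq_mul]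
  field_simp
  linarith

lemma cross3_zero_parallel (a u : EuclideanSpace ℝ (Fin 3)) (ha : a ≠ 0) (h : cross3 a u = 0) :
    ∃ s : ℝ, u = s • a := by
  have ha' : (WithLp.equiv 2 (Fin 3 → ℝ)) a ≠ 0 := by
    intro h0; exact ha ((WithLp.equiv 2 (Fin 3 → ℝ)).injective (by simpa using h0))
  have h' : crossProduct ((WithLp.equiv 2 (Fin 3 → ℝ)) a) ((WithLp.equiv 2 (Fin 3 → ℝ)) u) = 0 := by
    have := congrArg (WithLp.equiv 2 (Fin 3 → ℝ)) h
    simpa [cross3] using this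
  obtain ⟨s, hs⟩ := cross_zero_parallel _ _ ha' h'
  exact ⟨s, (WithLp.equiv 2 (Fin 3 → ℝ)).injective (by simpa using hs)⟩

lemma cross3_sub_right (a x y : EuclideanSpace ℝ (Fin 3)) :
    cross3 a (x - y) = cross3 a x - cross3 a y := by
  simp [cross3, map_sub]

lemma cross3_zero_left (x : EuclideanSpace ℝ (Fin 3)) : cross3 0 x = 0 := by
  simp [cross3]

lemma cross3_sub_left (a b x : EuclideanSpace ℝ (Fin 3)) :
    cross3 (a - b) x = cross3 a x - cross3 b x := by
  simp [cross3, map_sub]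

lemma cross3_smul_left (c : ℝ) (a x : EuclideanSpace ℝ (Fin 3)) :
    cross3 (c • a) x = c • cross3 a x := by
  simp [cross3, map_smul]

lemma cross3_add_left (a b x : EuclideanSpace ℝ (Fin 3)) :
    cross3 (a + b) x = cross3 a x + cross3 b x := by
  simp [cross3, map_add]

lemma cross3_sum_left {ι : Type*} (s : Finset ι) (f : ι → EuclideanSpace ℝ (Fin 3))
    (x : EuclideanSpace ℝ (Fin 3)) :
    cross3 (∑ i ∈ s, f i) x = ∑ i ∈ s, cross3 (f i) x := by
  classical
  induction s using Finset.induction with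
  | empty => simp [cross3_zero_left]
  | insert _ _ hn ih => simp [Finset.sum_insert hn, cross3_add_left, ih]

lemma key {V : Type*} (p : V → EuclideanSpace ℝ (Fin 3)) (i j k : V)
    (hind : AffineIndependent ℝ ![p i, p j, p k])
    (a b : EuclideanSpace ℝ (Fin 3)) (hz : ∀ v, b + cross3 a (p v) = 0) :
    a = 0 ∧ b = 0 := by
  have hsub : ∀ v w : V, cross3 a (p v - p w) = 0 := by
    intro v w
    rw [cross3_sub_right]
    have h1 := hz v; have h2 := hz w
    have : b + cross3 a (p v) = b + cross3 a (p w) := by rw [h1, h2]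
    have := add_left_cancel this
    rw [this, sub_self]
  have ha : a = 0 := by
    by_contra ha
    obtain ⟨s, hs⟩ := cross3_zero_parallel a _ ha (hsub j i)
    obtain ⟨t, ht⟩ := cross3_zero_parallel a _ ha (hsub k i)
    rw [affineIndependent_iff_not_collinear_set] at hind
    apply hind
    rw [collinear_iff_of_mem (Set.mem_insert (p i) _)]
    refine ⟨a, fun q hq => ?_⟩
    rcases hq with rfl | rfl | rfl
    · exact ⟨0, by simp⟩
    · exact ⟨s, by rw [← hs]; simp⟩
    · exact ⟨t, by rw [← ht]; simp⟩
  have hb : b = 0 := by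
    have := hz i
    rw [ha, cross3_zero_left, add_zero] at this
    exact this
  exact ⟨ha, hb⟩

/-- If some three of the points `p i` are affinely independent, then the linear map
`(a, b) ↦ (v ↦ b + a ×₃ p v)` from `ℝ³ × ℝ³` to vector fields on `V` is injective.
In particular the three coordinate translations and three coordinate rotations give six
linearly independent fields. -/
theorem rigid_motion_map_injective {V : Type*} [Fintype V]
    (p : V → EuclideanSpace ℝ (Fin 3))
    (h : ∃ i j k : V, AffineIndependent ℝ ![p i, p j, p k]) :
    Function.Injective
      (fun ab : EuclideanSpace ℝ (Fin 3) × EuclideanSpace ℝ (Fin 3) =>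
        (fun v => ab.2 + cross3 ab.1 (p v) : V → EuclideanSpace ℝ (Fin 3))) ∧
    LinearIndependent ℝ
      (fun q : Fin 3 ⊕ Fin 3 =>
        Sum.elim
          (fun k => (fun _ : V => EuclideanSpace.single k (1 : ℝ)))
          (fun k => (fun v : V => cross3 (EuclideanSpace.single k (1 : ℝ)) (p v))) q) := by
  obtain ⟨i, j, k, hind⟩ := h
  constructor
  · rintro ⟨a, b⟩ ⟨a', b'⟩ hab
    have hz : ∀ v, (b - b') + cross3 (a - a') (p v) = 0 := by
      intro v
      have := congrFun hab v
      simp only at this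
      rw [cross3_sub_left]
      have h0 : b + cross3 a (p v) - (b' + cross3 a' (p v)) = 0 := by rw [this, sub_self]
      rw [← h0]; abel
    obtain ⟨ha, hb⟩ := key p i j k hind _ _ hz
    have : a = a' := sub_eq_zero.mp ha
    have : b = b' := sub_eq_zero.mp hb
    simp_all
  · rw [Fintype.linearIndependent_iff]
    intro g hg q
    set a : EuclideanSpace ℝ (Fin 3) := ∑ m : Fin 3, g (Sum.inr m) • EuclideanSpace.single m (1:ℝ) with ha_def
    set b : EuclideanSpace ℝ (Fin 3) := ∑ m : Fin 3, g (Sum.inl m) • EuclideanSpace.single m (1:ℝ) with hb_def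
    have hz : ∀ v, b + cross3 a (p v) = 0 := by
      intro v
      have := congrFun hg v
      simp only [Fintype.sum_sum_type, Sum.elim_inl, Sum.elim_inr, Finset.sum_apply,
        Pi.smul_apply, Pi.zero_apply] at this
      rw [hb_def, ha_def, cross3_sum_left]
      rw [← this]
      congr 1
      apply Finset.sum_congr rfl
      intro m _
      rw [cross3_smul_left]
    obtain ⟨ha, hb⟩ := key p i j k hind a b hz
    have coeff : ∀ (c : Fin 3 → ℝ), (∑ m : Fin 3, c m • EuclideanSpace.single m (1:ℝ)) = 0 →
        ∀ m, c m = 0 := by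
      intro c hc m
      have := Fintype.linearIndependent_iff.mp
        (EuclideanSpace.basisFun (Fin 3) ℝ).toBasis.linearIndependent c
        (by simpa [EuclideanSpace.basisFun_apply] using hc) m
      exact this
    cases q with
    | inl m => exact coeff _ (hb_def ▸ hb) m
    | inr m => exact coeff _ (ha_def ▸ ha) m
end

section
/- Let n be a positive natural number, G a simple graph on Fin n, p : Fin n → EuclideanSpace ℝ (Fin 3), and let w : Fin n → Fin n → ℝ be a symmetric weight function with w i j ≠ 0 whenever G.Adj i j. Let C_w be the weighted coboundary matrix (row of edge (i,j), i < j: entries −w i j·(p j a − p i a) at columns (i,a), w i j·(p j a − p i a) at columns (j,a), 0 elsewhere) and let C₁ be the unit-weight coboundary matrix (the same with all weights equal to 1). Then the kernels of the associated linear maps coincide: ker C_w = ker C₁; consequently the weighted and unit-weight sheaf Laplacians have equal kernels, ker (C_wᵀ * C_w) = ker (C₁ᵀ * C₁), and in particular equal nullity. -/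
open Matrix

/-- With nonzero symmetric weights, the weighted coboundary matrix of the anisotropic
sheaf has the same kernel as the unit-weight one; consequently the weighted and
unit-weight sheaf Laplacians have equal kernels (hence equal nullity). -/
theorem weighted_unit_coboundary_ker_eq
    {n : ℕ} (hn : 0 < n) (G : SimpleGraph (Fin n)) [DecidableRel G.Adj]
    (p : Fin n → EuclideanSpace ℝ (Fin 3)) (w : Fin n → Fin n → ℝ)
    (hw : ∀ i j, w i j = w j i) (hw0 : ∀ i j, G.Adj i j → w i j ≠ 0)
    (Cw C1 : Matrix {e : Fin n × Fin n // e.1 < e.2 ∧ G.Adj e.1 e.2} (Fin n × Fin 3) ℝ)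
    (hCw : ∀ (e : {e : Fin n × Fin n // e.1 < e.2 ∧ G.Adj e.1 e.2}) (k : Fin n) (a : Fin 3),
      Cw e (k, a) =
        if k = e.1.1 then -(w e.1.1 e.1.2 * (p e.1.2 a - p e.1.1 a))
        else if k = e.1.2 then w e.1.1 e.1.2 * (p e.1.2 a - p e.1.1 a)
        else 0)
    (hC1 : ∀ (e : {e : Fin n × Fin n // e.1 < e.2 ∧ G.Adj e.1 e.2}) (k : Fin n) (a : Fin 3),
      C1 e (k, a) =
        if k = e.1.1 then -(p e.1.2 a - p e.1.1 a)
        else if k = e.1.2 then p e.1.2 a - p e.1.1 a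
        else 0) :
    LinearMap.ker Cw.mulVecLin = LinearMap.ker C1.mulVecLin ∧
    LinearMap.ker (Cwᵀ * Cw).mulVecLin = LinearMap.ker (C1ᵀ * C1).mulVecLin := by
  have hrow : ∀ e v, Cw e v = w e.1.1 e.1.2 * C1 e v := by
    rintro e ⟨k, a⟩
    rw [hCw, hC1]
    split_ifs <;> ring
  have hmv : ∀ (x : Fin n × Fin 3 → ℝ) e,
      Cw.mulVec x e = w e.1.1 e.1.2 * C1.mulVec x e := by
    intro x e
    simp only [mulVec, dotProduct, Finset.mul_sum]
    exact Finset.sum_congr rfl fun v _ => by rw [hrow]; ring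
  have hker : LinearMap.ker Cw.mulVecLin = LinearMap.ker C1.mulVecLin := by
    ext x
    simp only [LinearMap.mem_ker, mulVecLin_apply]
    constructor <;> intro h <;> funext e
    · have := congrFun h e
      rw [hmv] at this
      exact (mul_eq_zero.mp this).resolve_left (hw0 _ _ e.2.2)
    · simp [hmv, congrFun h e]
  refine ⟨hker, ?_⟩
  have key : ∀ (A : Matrix {e : Fin n × Fin n // e.1 < e.2 ∧ G.Adj e.1 e.2}
      (Fin n × Fin 3) ℝ),
      LinearMap.ker (Aᵀ * A).mulVecLin = LinearMap.ker A.mulVecLin := by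
    intro A
    ext x
    simp only [LinearMap.mem_ker, mulVecLin_apply]
    have : Aᵀ = Aᴴ := (conjTranspose_eq_transpose_of_trivial A).symm
    rw [this]
    exact conjTranspose_mul_self_mulVec_eq_zero A x
  rw [key, key, hker]
end

section
/- Let K be a finite homogeneous simplicial 3-complex in ℝ³ and let L be a simplicial complex in ℝ³ with L.faces ⊆ K.faces that is also homogeneous of dimension 3 (so L is generated by a collection of 3-simplices of K). If the underlying spaces coincide, L.space = K.space, then L = K, i.e., L.faces = K.faces. -/
open Finset

/-- If the centroid of an affinely independent finset `t` lies in the convex hull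
of a subfinset `r ⊆ t`, then `r = t` (stated as `t ⊆ r`). -/
lemma centroid_mem_convexHull_subset_imp {E : Type*} [AddCommGroup E] [Module ℝ E]
    (t r : Finset E) (hai : AffineIndependent ℝ ((↑) : t → E)) (hne : t.Nonempty)
    (hrt : r ⊆ t) (hc : t.centroid ℝ id ∈ convexHull ℝ (r : Set E)) :
    t ⊆ r := by
  classical
  obtain ⟨f, hf0, hf1, hfc⟩ := (Finset.mem_convexHull).1 hc
  -- express both as affine combinations over the subtype `↥t`
  have hrmap : (r.subtype (· ∈ t)).map (Function.Embedding.subtype _) = r :=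
    Finset.subtype_map_of_mem fun x hx => hrt hx
  have htmap : (t.subtype (· ∈ t)).map (Function.Embedding.subtype _) = t :=
    Finset.subtype_map_of_mem fun x hx => hx
  set s₁ : Finset {x // x ∈ t} := t.subtype (· ∈ t) with hs₁
  set s₂ : Finset {x // x ∈ t} := r.subtype (· ∈ t) with hs₂
  have hw₁sum : ∑ i ∈ s₁, t.centroidWeights ℝ (i : E) = 1 := by
    have h := Finset.sum_map s₁ (Function.Embedding.subtype (· ∈ t)) (t.centroidWeights ℝ)
    rw [htmap] at h
    simp only [Function.Embedding.coe_subtype] at h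
    rw [← h]
    exact t.sum_centroidWeights_eq_one_of_nonempty ℝ hne
  have hw₂sum : ∑ i ∈ s₂, f (i : E) = 1 := by
    have h := Finset.sum_map s₂ (Function.Embedding.subtype (· ∈ t)) f
    rw [hrmap] at h
    simp only [Function.Embedding.coe_subtype] at h
    rw [← h, hf1]
  have hcomb₁ : s₁.affineCombination ℝ ((↑) : t → E) (fun i => t.centroidWeights ℝ (i : E))
      = t.centroid ℝ id := by
    have h := Finset.affineCombination_map (s₂ := s₁)
      (Function.Embedding.subtype (· ∈ t)) (t.centroidWeights ℝ) (id : E → E)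
    rw [htmap] at h
    rw [Finset.centroid_def, h]
    rfl
  have hcomb₂ : s₂.affineCombination ℝ ((↑) : t → E) (fun i => f (i : E))
      = t.centroid ℝ id := by
    have h := Finset.affineCombination_map (s₂ := s₂)
      (Function.Embedding.subtype (· ∈ t)) f (id : E → E)
    rw [hrmap] at h
    rw [← hfc, ← (affineCombination_eq_centerMass hf1 : r.affineCombination ℝ id f = _), h]
    rfl
  have hind := hai.indicator_eq_of_affineCombination_eq s₁ s₂ _ _ hw₁sum hw₂sum
    (hcomb₁.trans hcomb₂.symm)
  -- now derive the inclusion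
  intro x hx
  by_contra hxr
  have hx₁ : (⟨x, hx⟩ : {y // y ∈ t}) ∈ s₁ := by
    simp [hs₁, Finset.mem_subtype, hx]
  have hx₂ : (⟨x, hx⟩ : {y // y ∈ t}) ∉ s₂ := by
    simp [hs₂, Finset.mem_subtype, hxr]
  have := congrFun hind ⟨x, hx⟩
  rw [Set.indicator_of_mem (by exact_mod_cast hx₁) _,
    Set.indicator_of_notMem (by exact_mod_cast hx₂) _] at this
  have hcard : (t.card : ℝ) ≠ 0 := by
    exact_mod_cast (Finset.card_pos.2 hne).ne'
  simp [Finset.centroidWeights_apply, hcard] at this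

/-- A homogeneous (pure) sub-3-complex of a finite homogeneous simplicial 3-complex in
`ℝ³` with the same underlying space must be the whole complex. -/
theorem subcomplex_space_eq_implies_eq
    (K L : Geometry.SimplicialComplex ℝ (EuclideanSpace ℝ (Fin 3)))
    (hKfin : K.faces.Finite)
    (hKhom : ∀ s ∈ K.faces, ∃ t ∈ K.faces, t.card = 4 ∧ s ⊆ t)
    (hLK : L.faces ⊆ K.faces)
    (hLhom : ∀ s ∈ L.faces, ∃ t ∈ L.faces, t.card = 4 ∧ s ⊆ t)
    (hspace : L.space = K.space) :
    L.faces = K.faces := by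
  classical
  refine Set.Subset.antisymm hLK fun s hs => ?_
  obtain ⟨t, ht, htcard, hst⟩ := hKhom s hs
  have hsne : s ≠ ∅ := fun h => K.empty_notMem (h ▸ hs)
  have htne : t.Nonempty := Finset.nonempty_of_ne_empty fun h =>
    by simp [h] at htcard
  suffices htL : t ∈ L.faces from L.down_closed htL hst (Finset.nonempty_iff_ne_empty.2 hsne)
  -- the centroid of t
  set c := t.centroid ℝ id with hc
  have hcmem : c ∈ convexHull ℝ (t : Set _) := t.centroid_mem_convexHull htne
  have hcK : c ∈ K.space := Geometry.SimplicialComplex.convexHull_subset_space ht hcmem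
  rw [← hspace] at hcK
  obtain ⟨u, hu, hcu⟩ := Geometry.SimplicialComplex.mem_space_iff.1 hcK
  obtain ⟨u', hu', hu'card, huu'⟩ := hLhom u hu
  have hcu' : c ∈ convexHull ℝ (u' : Set _) :=
    convexHull_mono (by exact_mod_cast huu') hcu
  have hinter : c ∈ convexHull ℝ ((u' ∩ t : Finset _) : Set _) := by
    have := K.inter_subset_convexHull (hLK hu') ht ⟨hcu', hcmem⟩
    simpa using this
  have hsub : t ⊆ u' ∩ t :=
    centroid_mem_convexHull_subset_imp t (u' ∩ t) (K.indep ht) htne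
      Finset.inter_subset_right hinter
  have htu' : t ⊆ u' := hsub.trans Finset.inter_subset_left
  have : t = u' := Finset.eq_of_subset_of_card_le htu' (by rw [htcard, hu'card])
  rw [this]
  exact hu'
end

section
/- Let K be a finite homogeneous simplicial 3-complex in ℝ³ and let τ ∈ K.faces be a 2-simplex, i.e., τ.card = 3. Then the number of 3-simplices of K containing τ, namely the cardinality of { σ ∈ K.faces | σ.card = 4 ∧ τ ⊆ σ }, is equal to 1 or 2. -/
open scoped Classical

open Finset AffineMap

local notation "E" => EuclideanSpace ℝ (Fin 3)

/-- Build an affine basis from a 4-element affinely independent finset in ℝ³. -/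
noncomputable def basisOf (σ : Finset E) (hind : AffineIndependent ℝ ((↑) : σ → E))
    (hc : σ.card = 4) : AffineBasis σ ℝ E :=
  ⟨(↑), hind, by
    rw [hind.affineSpan_eq_top_iff_card_eq_finrank_add_one]
    simp [hc, finrank_euclideanSpace_fin]⟩

@[simp] lemma basisOf_apply (σ : Finset E) (hind) (hc) (i : σ) :
    basisOf σ hind hc i = i.val := rfl

lemma aux_eval (τ : Finset E) (v : E) (hv : v ∉ τ)
    (hind : AffineIndependent ℝ ((↑) : ↥(insert v τ) → E))
    (hc : (insert v τ).card = 4)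
    (g : E →ᵃ[ℝ] ℝ) (hg : ∀ u ∈ τ, g u = 0) (x : E) :
    g x = (basisOf _ hind hc).coord ⟨v, Finset.mem_insert_self v τ⟩ x * g v := by
  classical
  set b := basisOf _ hind hc with hb
  set iv : (insert v τ : Finset E) := ⟨v, Finset.mem_insert_self v τ⟩ with hiv
  conv_lhs => rw [← b.affineCombination_coord_eq_self x]
  rw [Finset.map_affineCombination _ _ _ (b.sum_coord_apply_eq_one x),
    Finset.affineCombination_eq_linear_combination _ _ _ (b.sum_coord_apply_eq_one x),
    Finset.sum_eq_single iv]
  · rw [smul_eq_mul]; rfl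
  · intro i _ hne
    have hiτ : i.val ∈ τ := by
      rcases Finset.mem_insert.mp i.2 with h | h
      · exact absurd (Subtype.ext h) hne
      · exact h
    have : g (b i) = 0 := hg _ hiτ
    simp [this]
  · intro h; exact absurd (Finset.mem_univ _) h

set_option maxHeartbeats 1000000 in
lemma pair_contra (K : Geometry.SimplicialComplex ℝ (EuclideanSpace ℝ (Fin 3)))
    (τ : Finset E) (hcard : τ.card = 3)
    (v w : E) (hvτ : v ∉ τ) (hwτ : w ∉ τ) (hvw : v ≠ w)
    (hσ : insert v τ ∈ K.faces) (hσ' : insert w τ ∈ K.faces)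
    (g : E →ᵃ[ℝ] ℝ) (hg0 : ∀ u ∈ τ, g u = 0)
    (hgv : 0 < g v) (hgw : 0 < g w) : False := by
  classical
  have hτne : τ.Nonempty := Finset.card_pos.mp (by omega)
  have hσc : (insert v τ).card = 4 := by
    rw [Finset.card_insert_of_notMem hvτ, hcard]
  have hind : AffineIndependent ℝ ((↑) : ↥(insert v τ) → E) := K.indep hσ
  set b := basisOf _ hind hσc with hbdef
  set iv : ↥(insert v τ) := ⟨v, Finset.mem_insert_self v τ⟩ with hivdef
  -- coordinate of w at v is positive
  have hgw_eq : g w = b.coord iv w * g v := aux_eval τ v hvτ hind hσc g hg0 w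
  have hcv : 0 < b.coord iv w := by nlinarith
  -- the index set of τ and the centroid
  set T : Finset ↥(insert v τ) := Finset.univ.erase iv with hTdef
  have hTmem : ∀ i : ↥(insert v τ), i ∈ T ↔ i.val ∈ τ := by
    intro i
    constructor
    · intro hi
      rcases Finset.mem_insert.mp i.2 with h | h
      · exact absurd (Subtype.ext h) (Finset.ne_of_mem_erase hi)
      · exact h
    · intro hi
      refine Finset.mem_erase.mpr ⟨?_, Finset.mem_univ _⟩
      intro h
      rw [h] at hi
      exact hvτ hi
  have hTne : T.Nonempty := by
    obtain ⟨u, hu⟩ := hτne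
    exact ⟨⟨u, Finset.mem_insert_of_mem hu⟩, (hTmem _).mpr hu⟩
  have hTcard : T.card = 3 := by
    rw [hTdef, Finset.card_erase_of_mem (Finset.mem_univ _), Finset.card_univ,
      Fintype.card_coe, hσc]
  have hTimg : (⇑b) '' ↑T = (↑τ : Set E) := by
    ext x
    simp only [Set.mem_image, Finset.mem_coe, Finset.coe_sort_coe]
    constructor
    · rintro ⟨i, hi, rfl⟩
      exact (hTmem i).mp hi
    · intro hx
      exact ⟨⟨x, Finset.mem_insert_of_mem hx⟩, (hTmem _).mpr hx, rfl⟩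
  set c := T.centroid ℝ ⇑b with hcdef
  have hceq : c = τ.centroid ℝ id := by
    rw [hcdef]
    exact Finset.centroid_eq_of_inj_on_of_image_eq (k := ℝ) (s := T) (s₂ := τ)
      (hi := fun i _ j _ hij => Subtype.ext hij)
      (hi₂ := fun i _ j _ hij => hij)
      (he := by rw [Set.image_id]; exact hTimg)
  have hchull : c ∈ convexHull ℝ (↑τ : Set E) := by
    rw [hceq]
    exact τ.centroid_mem_convexHull hτne
  have hc_iv : b.coord iv c = 0 := by
    rw [hcdef, Finset.centroid_def]
    exact b.coord_apply_combination_of_notMem (by simp [hTdef])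
      (T.sum_centroidWeights_eq_one_of_nonempty ℝ hTne)
  have hc_T : ∀ i ∈ T, b.coord i c = (3 : ℝ)⁻¹ := by
    intro i hi
    rw [hcdef, b.coord_apply_centroid hi, hTcard]
    norm_num
  -- choose the interpolation parameter
  set M : ℝ := 1 + ∑ i : ↥(insert v τ), |b.coord i w| with hMdef
  have hM1 : 1 ≤ M := by
    have : 0 ≤ ∑ i : ↥(insert v τ), |b.coord i w| :=
      Finset.sum_nonneg fun i _ => abs_nonneg _
    linarith
  have habs : ∀ i : ↥(insert v τ), |b.coord i w| ≤ M - 1 := by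
    intro i
    have := Finset.single_le_sum (f := fun i => |b.coord i w|)
      (fun i _ => abs_nonneg _) (Finset.mem_univ i)
    simpa [hMdef] using this
  set s₀ : ℝ := 1 / (6 * M) with hs₀def
  have hMpos : (0:ℝ) < M := by linarith
  have hs₀pos : 0 < s₀ := by
    rw [hs₀def]
    exact div_pos one_pos (by linarith)
  have hMne : M ≠ 0 := ne_of_gt hMpos
  have hs₀M : s₀ * M = 1 / 6 := by
    rw [hs₀def, div_mul_eq_mul_div, one_mul, mul_comm 6 M, ← div_div, div_self hMne]
  have hs₀le : s₀ ≤ 1 / 6 := by nlinarith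
  -- the witness point
  set p := AffineMap.lineMap c w s₀ with hpdef
  have hpcoord : ∀ i : ↥(insert v τ),
      b.coord i p = (1 - s₀) * b.coord i c + s₀ * b.coord i w := by
    intro i
    rw [hpdef, AffineMap.apply_lineMap, AffineMap.lineMap_apply_module,
      smul_eq_mul, smul_eq_mul]
  have hppos : ∀ i : ↥(insert v τ), 0 < b.coord i p := by
    intro i
    rw [hpcoord i]
    by_cases hi : i = iv
    · subst hi
      rw [hc_iv]
      nlinarith
    · have hiT : i ∈ T := Finset.mem_erase.mpr ⟨hi, Finset.mem_univ _⟩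
      rw [hc_T i hiT]
      have h1 := (abs_le.mp (habs i)).1
      nlinarith
  -- p lies in the convex hull of both simplices
  have hrange : Set.range ⇑b = (↑(insert v τ) : Set E) := Subtype.range_coe
  have hpσ : p ∈ convexHull ℝ (↑(insert v τ) : Set E) := by
    have : p ∈ interior (convexHull ℝ (Set.range ⇑b)) := by
      rw [b.interior_convexHull]
      exact hppos
    rw [hrange] at this
    exact interior_subset this
  have hpσ' : p ∈ convexHull ℝ (↑(insert w τ) : Set E) := by
    have hsub : (↑τ : Set E) ⊆ (↑(insert w τ) : Set E) := by
      intro x hx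
      simp only [Finset.coe_insert, Set.mem_insert_iff]
      exact Or.inr hx
    have hc' : c ∈ convexHull ℝ (↑(insert w τ) : Set E) := convexHull_mono hsub hchull
    have hw' : w ∈ convexHull ℝ (↑(insert w τ) : Set E) :=
      subset_convexHull ℝ _ (by simp)
    have := convex_convexHull ℝ (↑(insert w τ) : Set E) hc' hw'
      (show (0:ℝ) ≤ 1 - s₀ by linarith) (le_of_lt hs₀pos) (by ring)
    rwa [hpdef, AffineMap.lineMap_apply_module]
  -- the intersection property forces p into the hull of τ
  have hinter : (insert v τ) ∩ (insert w τ) = τ := by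
    ext x
    simp only [Finset.mem_inter, Finset.mem_insert]
    constructor
    · rintro ⟨h1 | h1, h2 | h2⟩
      · exact absurd (h1.symm.trans h2) hvw
      · exact absurd (h1 ▸ h2) hvτ
      · exact absurd (h2 ▸ h1) hwτ
      · exact h1
    · exact fun h => ⟨Or.inr h, Or.inr h⟩
  have hpτ : p ∈ convexHull ℝ (↑τ : Set E) := by
    have := K.inter_subset_convexHull hσ hσ' ⟨hpσ, hpσ'⟩
    rwa [← Finset.coe_inter, hinter] at this
  -- but g is zero on the hull of τ and positive at p
  have hghull : ∀ x ∈ convexHull ℝ (↑τ : Set E), g x = 0 := by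
    intro x hx
    have hsub : convexHull ℝ (↑τ : Set E) ⊆ ⇑g ⁻¹' {0} :=
      convexHull_min (fun u hu => hg0 u hu) ((convex_singleton (0:ℝ)).affine_preimage g)
    exact hsub hx
  have hgc : g c = 0 := hghull c hchull
  have hgp : g p = 0 := hghull p hpτ
  rw [hpdef, AffineMap.apply_lineMap, AffineMap.lineMap_apply_module, hgc] at hgp
  simp only [smul_eq_mul, mul_zero, zero_add] at hgp
  exact absurd hgp (ne_of_gt (mul_pos hs₀pos hgw))

set_option maxHeartbeats 1000000 in
/-- In a finite homogeneous simplicial 3-complex in `ℝ³`, every 2-simplex is a face of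
exactly one or exactly two 3-simplices (its degree of upper adjacency is 1 or 2). -/
theorem upper_adjacency_degree_one_or_two
    (K : Geometry.SimplicialComplex ℝ (EuclideanSpace ℝ (Fin 3)))
    (hfin : K.faces.Finite)
    (hhom : ∀ s ∈ K.faces, ∃ t ∈ K.faces, t.card = 4 ∧ s ⊆ t)
    (τ : Finset (EuclideanSpace ℝ (Fin 3))) (hτ : τ ∈ K.faces) (hcard : τ.card = 3) :
    {σ | σ ∈ K.faces ∧ σ.card = 4 ∧ τ ⊆ σ}.ncard = 1 ∨
    {σ | σ ∈ K.faces ∧ σ.card = 4 ∧ τ ⊆ σ}.ncard = 2 := by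
  classical
  set S := {σ | σ ∈ K.faces ∧ σ.card = 4 ∧ τ ⊆ σ} with hSdef
  have hSfin : S.Finite := hfin.subset fun σ hσ => hσ.1
  have h1 : 1 ≤ S.ncard := by
    obtain ⟨t, ht, htc, hts⟩ := hhom τ hτ
    have hmem : t ∈ S := ⟨ht, htc, hts⟩
    have := (Set.ncard_pos hSfin).mpr ⟨t, hmem⟩
    omega
  have h2 : S.ncard ≤ 2 := by
    by_contra hgt
    push_neg at hgt
    rw [Set.two_lt_ncard hSfin] at hgt
    obtain ⟨σ₁, hσ₁, σ₂, hσ₂, σ₃, hσ₃, h12, h13, h23⟩ := hgt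
    have hextract : ∀ σ ∈ S, ∃ x, x ∉ τ ∧ σ = insert x τ := by
      rintro σ ⟨hf, hc4, hsub⟩
      have hcd : (σ \ τ).card = 1 := by
        rw [Finset.card_sdiff_of_subset hsub, hcard, hc4]
      obtain ⟨x, hx⟩ := Finset.card_eq_one.mp hcd
      have hxστ : x ∈ σ \ τ := hx ▸ Finset.mem_singleton_self x
      refine ⟨x, (Finset.mem_sdiff.mp hxστ).2, ?_⟩
      have h1 : σ = τ ∪ σ \ τ := (Finset.union_sdiff_of_subset hsub).symm
      rw [hx, Finset.union_comm] at h1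
      rw [h1, ← Finset.insert_eq]
    obtain ⟨v₁, hv₁τ, e₁⟩ := hextract σ₁ hσ₁
    obtain ⟨v₂, hv₂τ, e₂⟩ := hextract σ₂ hσ₂
    obtain ⟨v₃, hv₃τ, e₃⟩ := hextract σ₃ hσ₃
    have hv12 : v₁ ≠ v₂ := fun h => h12 (by rw [e₁, e₂, h])
    have hv13 : v₁ ≠ v₃ := fun h => h13 (by rw [e₁, e₃, h])
    have hv23 : v₂ ≠ v₃ := fun h => h23 (by rw [e₂, e₃, h])
    have hf₁ : insert v₁ τ ∈ K.faces := e₁ ▸ hσ₁.1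
    have hf₂ : insert v₂ τ ∈ K.faces := e₂ ▸ hσ₂.1
    have hf₃ : insert v₃ τ ∈ K.faces := e₃ ▸ hσ₃.1
    have hc₁ : (insert v₁ τ).card = 4 := by
      rw [Finset.card_insert_of_notMem hv₁τ, hcard]
    set b₁ := basisOf (insert v₁ τ) (K.indep hf₁) hc₁ with hb₁def
    set iv₁ : ↥(insert v₁ τ) := ⟨v₁, Finset.mem_insert_self v₁ τ⟩ with hiv₁def
    set f : EuclideanSpace ℝ (Fin 3) →ᵃ[ℝ] ℝ := b₁.coord iv₁ with hfdef
    -- `f` vanishes on τ, equals 1 at v₁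
    have hcoordτ : ∀ (x : EuclideanSpace ℝ (Fin 3)) (hx : x ∉ τ)
        (hxf : insert x τ ∈ K.faces) (hxc : (insert x τ).card = 4) (u : EuclideanSpace ℝ (Fin 3)),
        u ∈ τ → (basisOf (insert x τ) (K.indep hxf) hxc).coord
          ⟨x, Finset.mem_insert_self x τ⟩ u = 0 := by
      intro x hx hxf hxc u hu
      set b := basisOf (insert x τ) (K.indep hxf) hxc
      have hub : u = b ⟨u, Finset.mem_insert_of_mem hu⟩ := rfl
      rw [hub, b.coord_apply, if_neg]
      intro h
      have : x = u := congrArg Subtype.val h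
      exact hx (this ▸ hu)
    have hf0 : ∀ u ∈ τ, f u = 0 := fun u hu =>
      hcoordτ v₁ hv₁τ hf₁ hc₁ u hu
    have hf1 : f v₁ = 1 := by
      have h := b₁.coord_apply iv₁ iv₁
      rw [if_pos rfl] at h
      exact h
    -- `f` is nonzero on any other apex
    have hfnz : ∀ x, x ∉ τ → insert x τ ∈ K.faces → f x ≠ 0 := by
      intro x hxτ hxf hfx0
      have hxc : (insert x τ).card = 4 := by
        rw [Finset.card_insert_of_notMem hxτ, hcard]
      set b₂ := basisOf (insert x τ) (K.indep hxf) hxc with hb₂def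
      set ix : ↥(insert x τ) := ⟨x, Finset.mem_insert_self x τ⟩ with hixdef
      set g : EuclideanSpace ℝ (Fin 3) →ᵃ[ℝ] ℝ := b₂.coord ix with hgdef
      have hg0 : ∀ u ∈ τ, g u = 0 := fun u hu => hcoordτ x hxτ hxf hxc u hu
      have := aux_eval τ v₁ hv₁τ (K.indep hf₁) hc₁ g hg0 x
      rw [← hfdef, hfx0, zero_mul] at this
      have hg1 : g x = 1 := by
        have h := b₂.coord_apply ix ix
        rw [if_pos rfl] at h
        exact h
      rw [hg1] at this
      exact one_ne_zero this
    -- sign analysis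
    rcases lt_trichotomy 0 (f v₂) with h2p | h20 | h2n
    · exact pair_contra K τ hcard v₁ v₂ hv₁τ hv₂τ hv12 hf₁ hf₂ f hf0
        (by rw [hf1]; norm_num) h2p
    · exact hfnz v₂ hv₂τ hf₂ h20.symm
    · rcases lt_trichotomy 0 (f v₃) with h3p | h30 | h3n
      · exact pair_contra K τ hcard v₁ v₃ hv₁τ hv₃τ hv13 hf₁ hf₃ f hf0
          (by rw [hf1]; norm_num) h3p
      · exact hfnz v₃ hv₃τ hf₃ h30.symm
      · refine pair_contra K τ hcard v₂ v₃ hv₂τ hv₃τ hv23 hf₂ hf₃ (-f) ?_ ?_ ?_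
        · intro u hu
          simp [hf0 u hu]
        · simpa using h2n
        · simpa using h3n
  omega
end

section
/- Let K be a finite homogeneous simplicial 3-complex in ℝ³ whose underlying space K.space is convex (as holds for the 3D Delaunay triangulation of a finite point cloud in general position, whose space is the convex hull of the points). Then K is strongly connected through 2-faces: for any two faces τ, ρ ∈ K.faces with τ.card = 4 and ρ.card = 4, there exists a finite sequence σ₀, σ₁, …, σ_m ∈ K.faces of faces of cardinality 4 with σ₀ = τ, σ_m = ρ, and (σ_i ∩ σ_{i+1}).card = 3 for every i < m. -/
open Set MeasureTheory

local notation "E3" => EuclideanSpace ℝ (Fin 3)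

private lemma aux_span_ne_top (t : Finset E3) (ht : t.card ≤ 3) :
    affineSpan ℝ (t : Set E3) ≠ ⊤ := by
  intro htop
  rcases t.eq_empty_or_nonempty with rfl | hne
  · simp at htop
  · have hcard : Fintype.card ↥t = (t.card - 1) + 1 := by
      rw [Fintype.card_coe]
      have := Finset.card_pos.mpr hne
      omega
    have h1 := finrank_vectorSpan_range_le ℝ ((↑) : ↥t → E3) hcard
    have htop' : affineSpan ℝ (Set.range ((↑) : ↥t → E3)) = ⊤ := by
      rw [Subtype.range_coe]; exact htop
    have h2 := AffineSubspace.vectorSpan_eq_top_of_affineSpan_eq_top ℝ _ _ htop'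
    rw [h2, finrank_top, finrank_euclideanSpace_fin] at h1
    omega

private lemma aux_null (t : Finset E3) (ht : t.card ≤ 3) :
    volume (affineSpan ℝ (t : Set E3) : Set E3) = 0 :=
  Measure.addHaar_affineSubspace _ _ (aux_span_ne_top t ht)

private lemma aux_open_diff {ι : Type*} (G : Set ι) (hG : G.Countable)
    (F : ι → Set E3) (hF : ∀ i ∈ G, volume (F i) = 0)
    {W : Set E3} (hW : IsOpen W) (hne : W.Nonempty) :
    (W \ ⋃ i ∈ G, F i).Nonempty := by
  rw [Set.nonempty_iff_ne_empty]
  intro h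
  have hsub : W ⊆ ⋃ i ∈ G, F i := by
    rw [Set.diff_eq_empty] at h
    exact h
  have h0 : volume (⋃ i ∈ G, F i) = 0 := (measure_biUnion_null_iff hG).2 hF
  exact absurd (measure_mono_null hsub h0) (hW.measure_pos volume hne).ne'

private lemma aux_seg [DecidableEq E3] {x z w : E3} {s : Finset E3}
    (hw : w ∈ segment ℝ x z) (hws : w ∈ convexHull ℝ (s : Set E3))
    (hx : x ∉ convexHull ℝ (s : Set E3)) :
    z ∈ affineSpan ℝ ((insert x s : Finset E3) : Set E3) := by
  obtain ⟨a, b, ha, hb, hab, heq⟩ := hw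
  have hb0 : b ≠ 0 := by
    rintro rfl
    rw [add_zero] at hab
    rw [hab, one_smul, zero_smul, add_zero] at heq
    exact hx (heq ▸ hws)
  have h1 : (1 - b⁻¹) + b⁻¹ * a = 0 := by
    field_simp
    linarith
  have hz : z = AffineMap.lineMap x w (b⁻¹ : ℝ) := by
    rw [AffineMap.lineMap_apply_module, ← heq]
    rw [smul_add, smul_smul, smul_smul, ← add_assoc, ← add_smul, h1,
      inv_mul_cancel₀ hb0, zero_smul, one_smul, zero_add]
  have hmem : z ∈ line[ℝ, x, w] := hz ▸ AffineMap.lineMap_mem_affineSpan_pair _ _ _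
  refine SetLike.le_def.1 ?_ hmem
  rw [affineSpan_le]
  rintro p hp
  rcases hp with rfl | rfl
  · exact subset_affineSpan ℝ _ (by simp)
  · refine convexHull_subset_affineSpan (s : Set E3) |>.trans ?_ hws
    have : affineSpan ℝ (s : Set E3) ≤ affineSpan ℝ ((insert x s : Finset E3) : Set E3) := by
      apply affineSpan_mono
      simp [Finset.coe_insert, Set.subset_insert]
    exact fun q hq => this hq
/-- A finite homogeneous simplicial 3-complex in `ℝ³` with convex underlying space (such
as a Delaunay triangulation) is strongly connected through 2-faces: any two tetrahedra
are joined by a chain of tetrahedra in which consecutive ones share a 2-face. -/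
theorem strongly_connected_of_convex_space
    [DecidableEq (EuclideanSpace ℝ (Fin 3))]
    (K : Geometry.SimplicialComplex ℝ (EuclideanSpace ℝ (Fin 3)))
    (hfin : K.faces.Finite)
    (hhom : ∀ s ∈ K.faces, ∃ t ∈ K.faces, t.card = 4 ∧ s ⊆ t)
    (hconv : Convex ℝ K.space)
    (τ ρ : Finset (EuclideanSpace ℝ (Fin 3)))
    (hτ : τ ∈ K.faces) (hρ : ρ ∈ K.faces) (hτc : τ.card = 4) (hρc : ρ.card = 4) :
    ∃ (m : ℕ) (σ : Fin (m + 1) → Finset (EuclideanSpace ℝ (Fin 3))),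
      σ 0 = τ ∧ σ (Fin.last m) = ρ ∧
      (∀ i, σ i ∈ K.faces ∧ (σ i).card = 4) ∧
      (∀ i : Fin m, (σ i.castSucc ∩ σ i.succ).card = 3) := by
  -- the adjacency relation on tetrahedra
  set r : Finset E3 → Finset E3 → Prop := fun a b =>
    b ∈ K.faces ∧ b.card = 4 ∧ (a ∩ b).card = 3 with hr
  -- interior of the hull of a tetrahedron is nonempty
  have hint : ∀ σ : Finset E3, σ ∈ K.faces → σ.card = 4 →
      (interior (convexHull ℝ (σ : Set E3))).Nonempty := by
    intro σ hσf hσc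
    rw [(convex_convexHull ℝ _).interior_nonempty_iff_affineSpan_eq_top,
      affineSpan_convexHull]
    have h1 : affineSpan ℝ (Set.range ((↑) : ↥σ → E3)) = ⊤ := by
      rw [(K.indep hσf).affineSpan_eq_top_iff_card_eq_finrank_add_one,
        Fintype.card_coe, finrank_euclideanSpace_fin, hσc]
    rwa [Subtype.range_coe] at h1
  -- key claim: any tetrahedron is reachable from τ
  have key : Relation.ReflTransGen r τ ρ := by
    by_contra hnot
    set C : Set (Finset E3) :=
      {σ | σ ∈ K.faces ∧ σ.card = 4 ∧ Relation.ReflTransGen r τ σ} with hC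
    set D : Set (Finset E3) :=
      {σ | σ ∈ K.faces ∧ σ.card = 4 ∧ ¬ Relation.ReflTransGen r τ σ} with hD
    set SF : Set (Finset E3) := {s | s ∈ K.faces ∧ s.card ≤ 2} with hSF
    set A : Set E3 := ⋃ σ ∈ C, convexHull ℝ (σ : Set E3) with hA
    set B : Set E3 := ⋃ σ ∈ D, convexHull ℝ (σ : Set E3) with hB
    set S : Set E3 := ⋃ s ∈ SF, convexHull ℝ (s : Set E3) with hS
    have hCfin : C.Finite := hfin.subset fun σ h => h.1
    have hDfin : D.Finite := hfin.subset fun σ h => h.1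
    have hSFfin : SF.Finite := hfin.subset fun s h => h.1
    have hAcl : IsClosed A :=
      hCfin.isClosed_biUnion fun σ _ => (σ.finite_toSet.isCompact_convexHull ℝ).isClosed
    have hBcl : IsClosed B :=
      hDfin.isClosed_biUnion fun σ _ => (σ.finite_toSet.isCompact_convexHull ℝ).isClosed
    -- the space equals A ∪ B
    have hspace : K.space = A ∪ B := by
      apply Set.Subset.antisymm
      · rintro x hx
        rw [Geometry.SimplicialComplex.space, Set.mem_iUnion₂] at hx
        obtain ⟨s, hs, hxs⟩ := hx
        obtain ⟨t, htf, htc, hst⟩ := hhom s hs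
        have hxt : x ∈ convexHull ℝ (t : Set E3) :=
          convexHull_mono (Finset.coe_subset.2 hst) hxs
        by_cases hreach : Relation.ReflTransGen r τ t
        · exact Or.inl (Set.mem_biUnion ⟨htf, htc, hreach⟩ hxt)
        · exact Or.inr (Set.mem_biUnion ⟨htf, htc, hreach⟩ hxt)
      · rintro x (hx | hx) <;>
        · rw [Set.mem_iUnion₂] at hx
          obtain ⟨σ, hσ, hxσ⟩ := hx
          exact Geometry.SimplicialComplex.convexHull_subset_space hσ.1 hxσ
    -- the intersection of A and B is contained in the 1-skeleton S
    have hABS : A ∩ B ⊆ S := by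
      rintro x ⟨hxA, hxB⟩
      rw [hA, Set.mem_iUnion₂] at hxA
      rw [hB, Set.mem_iUnion₂] at hxB
      obtain ⟨σ, hσC, hx1⟩ := hxA
      obtain ⟨σ', hσ'D, hx2⟩ := hxB
      have hx' : x ∈ convexHull ℝ ((σ ∩ σ' : Finset E3) : Set E3) := by
        rw [Finset.coe_inter]
        exact K.inter_subset_convexHull hσC.1 hσ'D.1 ⟨hx1, hx2⟩
      have hne : (σ ∩ σ' : Finset E3).Nonempty := by
        rw [Finset.nonempty_iff_ne_empty]
        rintro h
        rw [h] at hx'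
        simp at hx'
      have hface : (σ ∩ σ' : Finset E3) ∈ K.faces :=
        K.down_closed hσC.1 Finset.inter_subset_left hne
      have hcard : (σ ∩ σ' : Finset E3).card ≤ 2 := by
        by_contra h3
        push_neg at h3
        have hle : (σ ∩ σ' : Finset E3).card ≤ 4 := by
          have h5 := Finset.card_le_card (Finset.inter_subset_left (s₁ := σ) (s₂ := σ'))
          have h6 := hσC.2.1
          omega
        rcases Nat.lt_or_ge (σ ∩ σ' : Finset E3).card 4 with h4 | h4
        · -- card = 3 : adjacency
          have h33 : (σ ∩ σ' : Finset E3).card = 3 := by omega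
          exact hσ'D.2.2 (hσC.2.2.tail ⟨hσ'D.1, hσ'D.2.1, h33⟩)
        · -- card = 4 : equality
          have h44 : (σ ∩ σ' : Finset E3).card = 4 := by omega
          have he1 : σ ∩ σ' = σ :=
            Finset.eq_of_subset_of_card_le Finset.inter_subset_left (by have := hσC.2.1; omega)
          have he2 : σ ∩ σ' = σ' :=
            Finset.eq_of_subset_of_card_le Finset.inter_subset_right (by have := hσ'D.2.1; omega)
          rw [he1] at he2
          rw [he2] at hσC
          exact hσ'D.2.2 hσC.2.2
      exact Set.mem_biUnion (show σ ∩ σ' ∈ SF from ⟨hface, hcard⟩) hx'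
    -- S is covered by affine spans of small faces, which are null sets
    have hSsub : ∀ x : E3, ∀ s ∈ SF,
        convexHull ℝ ((s : Finset E3) : Set E3) ⊆
          (affineSpan ℝ ((insert x s : Finset E3) : Set E3) : Set E3) := by
      intro x s _
      refine (convexHull_subset_affineSpan _).trans ?_
      have : affineSpan ℝ ((s : Finset E3) : Set E3) ≤
          affineSpan ℝ ((insert x s : Finset E3) : Set E3) := by
        apply affineSpan_mono
        simp [Finset.coe_insert, Set.subset_insert]
      exact fun q hq => this hq
    have hinsert_card : ∀ x : E3, ∀ s ∈ SF, ((insert x s : Finset E3)).card ≤ 3 := by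
      intro x s hs
      calc (insert x s : Finset E3).card ≤ s.card + 1 := Finset.card_insert_le _ _
        _ ≤ 3 := by have := hs.2; omega
    -- pick interior points of τ and ρ avoiding S
    have hpick : ∀ σ : Finset E3, σ ∈ K.faces → σ.card = 4 →
        ∃ p, p ∈ interior (convexHull ℝ (σ : Set E3)) ∧ p ∉ S := by
      intro σ hσf hσc
      obtain ⟨p, hpW, hpS⟩ := aux_open_diff SF hSFfin.countable
        (fun s => (affineSpan ℝ ((insert (0:E3) s : Finset E3) : Set E3) : Set E3))
        (fun s hs => aux_null _ (hinsert_card _ s hs)) isOpen_interior (hint σ hσf hσc)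
      refine ⟨p, hpW, fun hpS' => hpS ?_⟩
      rw [hS, Set.mem_iUnion₂] at hpS'
      obtain ⟨s, hsSF, hps⟩ := hpS'
      exact Set.mem_biUnion hsSF (hSsub (0:E3) s hsSF hps)
    -- the open region and the connectivity argument
    set U : Set E3 := interior K.space with hU
    set V : Set E3 := U \ S with hV
    have hUopen : IsOpen U := isOpen_interior
    have hUconv : Convex ℝ U := hconv.interior
    obtain ⟨a, haint, haS⟩ := hpick τ hτ hτc
    obtain ⟨b, hbint, hbS⟩ := hpick ρ hρ hρc
    have hsubU : ∀ σ : Finset E3, σ ∈ K.faces →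
        interior (convexHull ℝ (σ : Set E3)) ⊆ U :=
      fun σ hσf => interior_mono (Geometry.SimplicialComplex.convexHull_subset_space hσf)
    have haV : a ∈ V := ⟨hsubU τ hτ haint, haS⟩
    have hbV : b ∈ V := ⟨hsubU ρ hρ hbint, hbS⟩
    -- V is path connected
    have hjoin : ∀ x y : E3, x ∈ V → y ∈ V → JoinedIn V x y := by
      intro x y hx hy
      obtain ⟨z, hzU, hz⟩ := aux_open_diff SF hSFfin.countable
        (fun s => (affineSpan ℝ ((insert x s : Finset E3) : Set E3) : Set E3) ∪
          (affineSpan ℝ ((insert y s : Finset E3) : Set E3) : Set E3))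
        (fun s hs => measure_union_null (aux_null _ (hinsert_card x s hs))
          (aux_null _ (hinsert_card y s hs)))
        hUopen ⟨x, hx.1⟩
      have hzS : z ∉ S := by
        intro hzS
        rw [hS, Set.mem_iUnion₂] at hzS
        obtain ⟨s, hsSF, hzs⟩ := hzS
        exact hz (Set.mem_biUnion hsSF (Or.inl (hSsub x s hsSF hzs)))
      have hseg : ∀ p : E3, p ∈ V → (∀ s ∈ SF, p ∉ convexHull ℝ ((s : Finset E3) : Set E3)) →
          (∀ s ∈ SF, z ∉ (affineSpan ℝ ((insert p s : Finset E3) : Set E3) : Set E3)) →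
          JoinedIn V p z := by
        intro p hp hpS hzp
        have hsub : segment ℝ p z ⊆ V := by
          intro w hw
          refine ⟨hUconv.segment_subset hp.1 hzU hw, ?_⟩
          intro hwS
          rw [hS, Set.mem_iUnion₂] at hwS
          obtain ⟨s, hsSF, hws⟩ := hwS
          exact hzp s hsSF (aux_seg hw hws (hpS s hsSF))
        have : JoinedIn (segment ℝ p z) p z :=
          ((convex_segment p z).isPathConnected ⟨p, left_mem_segment ℝ p z⟩).joinedIn
            p (left_mem_segment ℝ p z) z (right_mem_segment ℝ p z)
        exact this.mono hsub
      have hnotin : ∀ p : E3, p ∉ S → ∀ s ∈ SF, p ∉ convexHull ℝ ((s : Finset E3) : Set E3) :=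
        fun p hpS s hsSF hps => hpS (Set.mem_biUnion hsSF hps)
      have h1 : JoinedIn V x z :=
        hseg x hx (hnotin x hx.2) (fun s hsSF hzp => hz (Set.mem_biUnion hsSF (Or.inl hzp)))
      have h2 : JoinedIn V y z :=
        hseg y hy (hnotin y hy.2) (fun s hsSF hzp => hz (Set.mem_biUnion hsSF (Or.inr hzp)))
      exact h1.trans h2.symm
    have hVpc : IsPreconnected V := by
      have : IsPathConnected V := ⟨a, haV, fun {y} hy => hjoin a y haV hy⟩
      exact this.isConnected.isPreconnected
    -- final contradiction via connectedness
    have haA : a ∈ A := Set.mem_biUnion (show τ ∈ C from ⟨hτ, hτc, Relation.ReflTransGen.refl⟩)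
      (interior_subset haint)
    have hbB : b ∈ B := Set.mem_biUnion (show ρ ∈ D from ⟨hρ, hρc, hnot⟩)
      (interior_subset hbint)
    have hcover : V ⊆ Aᶜ ∪ Bᶜ := by
      intro p hp
      by_contra hpc
      simp only [Set.mem_union, Set.mem_compl_iff, not_or, not_not] at hpc
      exact hp.2 (hABS ⟨hpc.1, hpc.2⟩)
    have haBc : a ∈ V ∩ Bᶜ := ⟨haV, fun haB => haS (hABS ⟨haA, haB⟩)⟩
    have hbAc : b ∈ V ∩ Aᶜ := ⟨hbV, fun hbA => hbS (hABS ⟨hbA, hbB⟩)⟩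
    obtain ⟨p, hpV, hpA, hpB⟩ := hVpc Aᶜ Bᶜ hAcl.isOpen_compl hBcl.isOpen_compl hcover
      ⟨b, hbAc.1, hbAc.2⟩ ⟨a, haBc.1, haBc.2⟩
    have : p ∈ K.space := interior_subset hpV.1
    rw [hspace] at this
    rcases this with h | h
    · exact hpA h
    · exact hpB h
  -- turn reachability into a chain
  clear hρ hρc
  induction key with
  | refl => exact ⟨0, fun _ => τ, rfl, rfl, fun _ => ⟨hτ, hτc⟩, fun i => i.elim0⟩
  | @tail b c hb hbc ih =>
    obtain ⟨m, σ, h0, hl, hmem, hadj⟩ := ih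
    refine ⟨m + 1, Fin.snoc σ c, ?_, ?_, ?_, ?_⟩
    · rw [show (0 : Fin (m + 2)) = Fin.castSucc 0 from rfl, Fin.snoc_castSucc, h0]
    · rw [Fin.snoc_last]
    · intro i
      refine Fin.lastCases ?_ ?_ i
      · rw [Fin.snoc_last]; exact ⟨hbc.1, hbc.2.1⟩
      · intro j; rw [Fin.snoc_castSucc]; exact hmem j
    · intro i
      refine Fin.lastCases ?_ ?_ i
      · rw [Fin.succ_last, Fin.snoc_last, Fin.snoc_castSucc, hl]
        exact hbc.2.2
      · intro j
        rw [Fin.succ_castSucc, Fin.snoc_castSucc, Fin.snoc_castSucc]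
        exact hadj j
end

section
/- Let x : Fin 4 → EuclideanSpace ℝ (Fin 3) be an affinely independent family of four points and let z ∈ EuclideanSpace ℝ (Fin 3) with z ∉ convexHull ℝ (Set.range x). Then there exist an index i, a vector v ∈ EuclideanSpace ℝ (Fin 3), and a scalar c ∈ ℝ such that ⟪v, x j⟫ = c for every j ≠ i, the simplex lies in the closed half-space: convexHull ℝ (Set.range x) ⊆ { y | c ≤ ⟪v, y⟫ }, and ⟪v, z⟫ < c. That is, the hyperplane spanned by one of the 2-faces of the 3-simplex separates z from the simplex into disjoint open and closed half-spaces. -/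
open scoped RealInnerProductSpace

/-- A point outside a nondegenerate 3-simplex in `ℝ³` is separated from the simplex by
the hyperplane spanned by one of its 2-faces: the simplex lies in the closed half-space
and the point in the complementary open half-space. -/
theorem exists_separating_face_hyperplane
    (x : Fin 4 → EuclideanSpace ℝ (Fin 3)) (hx : AffineIndependent ℝ x)
    (z : EuclideanSpace ℝ (Fin 3)) (hz : z ∉ convexHull ℝ (Set.range x)) :
    ∃ (i : Fin 4) (v : EuclideanSpace ℝ (Fin 3)) (c : ℝ),
      (∀ j, j ≠ i → ⟪v, x j⟫ = c) ∧
      convexHull ℝ (Set.range x) ⊆ {y : EuclideanSpace ℝ (Fin 3) | c ≤ ⟪v, y⟫} ∧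
      ⟪v, z⟫ < c := by
  have hspan : affineSpan ℝ (Set.range x) = ⊤ := by
    rw [hx.affineSpan_eq_top_iff_card_eq_finrank_add_one]
    simp
  let b : AffineBasis (Fin 4) ℝ (EuclideanSpace ℝ (Fin 3)) := ⟨x, hx, hspan⟩
  have hrange : Set.range x = Set.range b := rfl
  rw [hrange, b.convexHull_eq_nonneg_coord] at hz
  simp only [Set.mem_setOf_eq, not_forall, not_le] at hz
  obtain ⟨i, hi⟩ := hz
  -- hi : b.coord i z < 0
  -- represent the linear part of the coordinate functional with an inner product
  set f := (b.coord i).linear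
  obtain ⟨v, hv⟩ : ∃ v, ∀ y, ⟪v, y⟫ = f y := by
    refine ⟨(InnerProductSpace.toDual ℝ (EuclideanSpace ℝ (Fin 3))).symm
      (LinearMap.toContinuousLinearMap f), fun y => ?_⟩
    simp [real_inner_comm]
  have key : ∀ y, b.coord i y = ⟪v, y⟫ + b.coord i 0 := by
    intro y
    have := (b.coord i).map_vadd 0 y
    simp only [vadd_eq_add, add_zero] at this
    rw [this, hv]
  refine ⟨i, v, -(b.coord i 0), fun j hj => ?_, fun y hy => ?_, ?_⟩
  · have : b.coord i (x j) = 0 := by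
      have := b.coord_apply i j
      simp [if_neg (Ne.symm hj)] at this
      exact this
    have := key (x j)
    rw [this] at *
    linarith [key (x j), ‹b.coord i (x j) = 0›]
  · rw [hrange, b.convexHull_eq_nonneg_coord] at hy
    have := hy i
    have hk := key y
    simp only [Set.mem_setOf_eq]
    linarith
  · have hk := key z
    linarith
end

section
/- Let x₀, x₁, x₂, x₃ ∈ EuclideanSpace ℝ (Fin 3) be affinely independent, and let v ∈ EuclideanSpace ℝ (Fin 3) satisfy ⟪v, x₁ − x₀⟫ = 0, ⟪v, x₂ − x₀⟫ = 0, and 0 < ⟪v, x₃ − x₀⟫. Let y ∈ EuclideanSpace ℝ (Fin 3) be another point with 0 < ⟪v, y − x₀⟫ such that x₀, x₁, x₂, y are affinely independent. Then the topological interiors of the two tetrahedra intersect: interior (convexHull ℝ {x₀, x₁, x₂, x₃}) ∩ interior (convexHull ℝ {x₀, x₁, x₂, y}) ≠ ∅. In particular, two nondegenerate tetrahedra sharing the 2-face conv(x₀, x₁, x₂) with their fourth vertices strictly on the same side of its spanning hyperplane have overlapping interiors. -/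
set_option maxHeartbeats 1000000


open scoped RealInnerProductSpace

/-- Two nondegenerate tetrahedra sharing the 2-face `conv(x₀, x₁, x₂)`, whose fourth
vertices lie strictly on the same side of the hyperplane spanned by that face, have
intersecting interiors. -/
theorem interiors_intersect_of_same_side
    (x₀ x₁ x₂ x₃ y v : EuclideanSpace ℝ (Fin 3))
    (hind : AffineIndependent ℝ ![x₀, x₁, x₂, x₃])
    (h1 : ⟪v, x₁ - x₀⟫ = 0) (h2 : ⟪v, x₂ - x₀⟫ = 0) (h3 : 0 < ⟪v, x₃ - x₀⟫)
    (hy : 0 < ⟪v, y - x₀⟫)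
    (hind' : AffineIndependent ℝ ![x₀, x₁, x₂, y]) :
    (interior (convexHull ℝ ({x₀, x₁, x₂, x₃} : Set (EuclideanSpace ℝ (Fin 3)))) ∩
      interior (convexHull ℝ ({x₀, x₁, x₂, y} : Set (EuclideanSpace ℝ (Fin 3))))).Nonempty := by
  have hcard : Fintype.card (Fin 4) = Module.finrank ℝ (EuclideanSpace ℝ (Fin 3)) + 1 := by
    simp [finrank_euclideanSpace]
  let b : AffineBasis (Fin 4) ℝ (EuclideanSpace ℝ (Fin 3)) :=
    ⟨![x₀, x₁, x₂, x₃], hind, hind.affineSpan_eq_top_iff_card_eq_finrank_add_one.mpr hcard⟩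
  let b' : AffineBasis (Fin 4) ℝ (EuclideanSpace ℝ (Fin 3)) :=
    ⟨![x₀, x₁, x₂, y], hind', hind'.affineSpan_eq_top_iff_card_eq_finrank_add_one.mpr hcard⟩
  set a : Fin 4 → ℝ := fun i => b.coord i y with ha
  have hsum : a 0 + a 1 + a 2 + a 3 = 1 := by
    have := b.sum_coord_apply_eq_one y
    rw [Fin.sum_univ_four] at this
    exact this
  have hyeq : y = a 0 • x₀ + a 1 • x₁ + a 2 • x₂ + a 3 • x₃ := by
    have := b.linear_combination_coord_eq_self y
    rw [Fin.sum_univ_four] at this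
    have hb : ⇑b = ![x₀, x₁, x₂, x₃] := rfl
    rw [hb] at this
    simpa [ha] using this.symm
  have ha3 : 0 < a 3 := by
    have h0 : a 0 = 1 - a 1 - a 2 - a 3 := by linarith
    have hy' : y - x₀ = a 1 • (x₁ - x₀) + a 2 • (x₂ - x₀) + a 3 • (x₃ - x₀) := by
      rw [hyeq, h0]; module
    have hkey : ⟪v, y - x₀⟫ = a 3 * ⟪v, x₃ - x₀⟫ := by
      rw [hy', inner_add_right, inner_add_right, real_inner_smul_right,
        real_inner_smul_right, real_inner_smul_right, h1, h2]; ring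
    rcases mul_pos_iff.mp (hkey ▸ hy) with ⟨h, _⟩ | ⟨_, h⟩
    · exact h
    · linarith
  set S : ℝ := |a 0| + |a 1| + |a 2| with hS
  have hS0 : 0 ≤ S := by positivity
  set t : ℝ := 1 / (6 * (1 + S)) with ht
  have ht0 : 0 < t := by positivity
  have heq : t * (1 + S) = 1 / 6 := by
    rw [ht]; field_simp
  have ht6 : t ≤ 1 / 6 := by nlinarith
  have hpos : ∀ r : ℝ, |r| ≤ S → 0 < (1 - t) / 3 + t * r := by
    intro r hr
    have h1 : -(t * |r|) ≤ t * r := by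
      have := neg_abs_le r
      nlinarith
    nlinarith [mul_le_mul_of_nonneg_left hr (le_of_lt ht0)]
  set w : Fin 4 → ℝ := ![(1 - t) / 3 + t * a 0, (1 - t) / 3 + t * a 1,
      (1 - t) / 3 + t * a 2, t * a 3] with hw
  set w' : Fin 4 → ℝ := ![(1 - t) / 3, (1 - t) / 3, (1 - t) / 3, t] with hw'
  have hwsum : ∑ i, w i = 1 := by
    rw [Fin.sum_univ_four]
    simp only [hw, Matrix.cons_val_zero, Matrix.cons_val_one, Matrix.head_cons,
      Matrix.cons_val_two, Matrix.tail_cons, Matrix.cons_val_three]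
    linear_combination t * hsum
  have hw'sum : ∑ i, w' i = 1 := by
    rw [Fin.sum_univ_four]
    simp only [hw', Matrix.cons_val_zero, Matrix.cons_val_one, Matrix.head_cons,
      Matrix.cons_val_two, Matrix.tail_cons, Matrix.cons_val_three]
    ring
  have hwpos : ∀ i : Fin 4, 0 < w i := by
    intro i
    fin_cases i <;> simp only [hw, Fin.zero_eta, Fin.mk_one, Fin.isValue, Matrix.cons_val_zero,
      Matrix.cons_val_one, Matrix.head_cons, Matrix.cons_val_two, Matrix.tail_cons,
      Matrix.cons_val_three, Fin.reduceFinMk]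
    · exact hpos (a 0) (by rw [hS]; nlinarith [abs_nonneg (a 1), abs_nonneg (a 2)])
    · exact hpos (a 1) (by rw [hS]; nlinarith [abs_nonneg (a 0), abs_nonneg (a 2)])
    · exact hpos (a 2) (by rw [hS]; nlinarith [abs_nonneg (a 0), abs_nonneg (a 1)])
    · exact mul_pos ht0 ha3
  have hw'pos : ∀ i : Fin 4, 0 < w' i := by
    intro i
    fin_cases i <;> simp only [hw', Fin.zero_eta, Fin.mk_one, Fin.isValue, Matrix.cons_val_zero,
      Matrix.cons_val_one, Matrix.head_cons, Matrix.cons_val_two, Matrix.tail_cons,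
      Matrix.cons_val_three, Fin.reduceFinMk] <;> linarith
  set p : EuclideanSpace ℝ (Fin 3) := Finset.univ.affineCombination ℝ (⇑b) w with hp
  have hpeq : p = Finset.univ.affineCombination ℝ (⇑b') w' := by
    rw [hp, Finset.univ.affineCombination_eq_linear_combination _ _ hwsum,
      Finset.univ.affineCombination_eq_linear_combination _ _ hw'sum,
      Fin.sum_univ_four, Fin.sum_univ_four]
    have hb : ⇑b = ![x₀, x₁, x₂, x₃] := rfl
    have hb' : ⇑b' = ![x₀, x₁, x₂, y] := rfl
    simp only [hb, hb', hw, hw', Matrix.cons_val_zero, Matrix.cons_val_one,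
      Matrix.head_cons, Matrix.cons_val_two, Matrix.tail_cons, Matrix.cons_val_three]
    rw [hyeq]
    module
  have hmem1 : p ∈ interior (convexHull ℝ (Set.range ⇑b)) := by
    rw [b.interior_convexHull]
    intro i
    rw [hp, b.coord_apply_combination_of_mem (Finset.mem_univ i) hwsum]
    exact hwpos i
  have hmem2 : p ∈ interior (convexHull ℝ (Set.range ⇑b')) := by
    rw [b'.interior_convexHull]
    intro i
    rw [hpeq, b'.coord_apply_combination_of_mem (Finset.mem_univ i) hw'sum]
    exact hw'pos i
  have hrange : Set.range ⇑b = ({x₀, x₁, x₂, x₃} : Set (EuclideanSpace ℝ (Fin 3))) := by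
    show Set.range ![x₀, x₁, x₂, x₃] = _
    simp only [Matrix.range_cons, Matrix.range_empty, Set.union_empty]
    ext z
    simp [or_comm, or_assoc, or_left_comm]
  have hrange' : Set.range ⇑b' = ({x₀, x₁, x₂, y} : Set (EuclideanSpace ℝ (Fin 3))) := by
    show Set.range ![x₀, x₁, x₂, y] = _
    simp only [Matrix.range_cons, Matrix.range_empty, Set.union_empty]
    ext z
    simp [or_comm, or_assoc, or_left_comm]
  exact ⟨p, hrange ▸ hmem1, hrange' ▸ hmem2⟩
end
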